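/- arXiv:1512.07486 — 5 statements merged into one kernel-verified Lean document; each statement's English description precedes it below -/
import Mathlib

section
/- (Additivity of Δ_Z) Let ρ₁ be a density matrix on ℂ^{d_{A₁}} ⊗ ℂ^{d_{B₁}} and ρ₂ a density matrix on ℂ^{d_{A₂}} ⊗ ℂ^{d_{B₂}}. Regard the Kronecker product ρ₁ ⊗ ρ₂ as a density matrix on ℂ^{d_{A₁}d_{A₂}} ⊗ ℂ^{d_{B₁}d_{B₂}} via the index bijection ((a₁,b₁),(a₂,b₂)) ↦ ((a₁,a₂),(b₁,b₂)), and take as incoherent basis on A₁A₂ the product computational basis. Then Δ_{Z}(ρ₁ ⊗ ρ₂) = Δ_{Z₁}(ρ₁) + Δ_{Z₂}(ρ₂). In particular, for n identical copies, Δ_Z(ρ^{⊗n}) = n·Δ_Z(ρ). -/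
open scoped Classical ComplexOrder
open Matrix Kronecker BigOperators

noncomputable section

/-- The von Neumann entropy (in bits) of a matrix: `-∑ᵢ λᵢ log₂ λᵢ` over its eigenvalues
(with the convention `0 · log₂ 0 = 0`); junk value `0` if the matrix is not Hermitian. -/
noncomputable def vnEntropy {n : Type*} [Fintype n] [DecidableEq n]
    (ρ : Matrix n n ℂ) : ℝ :=
  if h : ρ.IsHermitian then -∑ i, h.eigenvalues i * Real.logb 2 (h.eigenvalues i) else 0

/-- A density matrix: positive semidefinite with unit trace. -/
def IsDensity {n : Type*} [Fintype n] (ρ : Matrix n n ℂ) : Prop :=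
  ρ.PosSemidef ∧ ρ.trace = 1

/-- The dephasing (pinching) map on subsystem `A` with respect to the computational basis:
`Δ(ρ) = ∑ c (|c⟩⟨c| ⊗ I_B) ρ (|c⟩⟨c| ⊗ I_B)`. -/
noncomputable def dephA {A B : Type*} [Fintype A] [DecidableEq A] [Fintype B] [DecidableEq B]
    (ρ : Matrix (A × B) (A × B) ℂ) : Matrix (A × B) (A × B) ℂ :=
  ∑ c : A, (Matrix.single c c (1 : ℂ) ⊗ₖ (1 : Matrix B B ℂ)) * ρ *
    (Matrix.single c c (1 : ℂ) ⊗ₖ (1 : Matrix B B ℂ))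

/-- The monotone `Δ_Z(ρ) = S(Δ(ρ)) − S(ρ)`. -/
noncomputable def DeltaZ {A B : Type*} [Fintype A] [DecidableEq A] [Fintype B] [DecidableEq B]
    (ρ : Matrix (A × B) (A × B) ℂ) : ℝ :=
  vnEntropy (dephA ρ) - vnEntropy ρ

/-! Von Neumann entropy depends only on the spectrum, i.e. on the characteristic polynomial, so
it is invariant under reindexing; the spectrum of `A ⊗ B` consists of the products `λᵢ μⱼ`, so for
unit-trace Hermitian matrices `S(A ⊗ B) = S(A) + S(B)`. Dephasing commutes with the tensor product
once the factors are reordered, and both unit trace and hermiticity survive dephasing, so the two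
entropies in `Δ_Z(ρ₁ ⊗ ρ₂)` split separately. -/

open Polynomial

lemma Polynomial.roots_univ_prod_X_sub_C {R κ : Type*} [CommRing R] [IsDomain R] [Fintype κ]
    (f : κ → R) : (∏ k, (X - C (f k))).roots = Finset.univ.val.map f := by
  rw [roots_prod _ _ (Finset.prod_ne_zero_iff.mpr fun k _ => X_sub_C_ne_zero _)]
  simp

lemma Real.mul_mul_logb_mul (b x y : ℝ) :
    x * y * logb b (x * y) = y * (x * logb b x) + x * (y * logb b y) := by
  rcases eq_or_ne x 0 with rfl | hx
  · simp
  rcases eq_or_ne y 0 with rfl | hy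
  · simp
  rw [logb_mul hx hy]
  ring

lemma Real.sum_mul_logb_prod {ι κ : Type*} [Fintype ι] [Fintype κ] (b : ℝ) {p : ι → ℝ}
    {q : κ → ℝ} (hp : ∑ i, p i = 1) (hq : ∑ k, q k = 1) :
    ∑ x : ι × κ, p x.1 * q x.2 * logb b (p x.1 * q x.2) =
      ∑ i, p i * logb b (p i) + ∑ k, q k * logb b (q k) := by
  simp only [mul_mul_logb_mul, Fintype.sum_prod_type, Finset.sum_add_distrib, ← Finset.sum_mul,
    ← Finset.mul_sum, hq, one_mul, hp]

namespace Matrix.IsHermitian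

lemma kronecker {m n : Type*} {A : Matrix m m ℂ} {B : Matrix n n ℂ} (hA : A.IsHermitian)
    (hB : B.IsHermitian) : (A ⊗ₖ B).IsHermitian :=
  (conjTranspose_kronecker A B).trans (by rw [hA.eq, hB.eq])

variable {m n κ : Type*} [Fintype m] [DecidableEq m] [Fintype n] [DecidableEq n] [Fintype κ]

lemma map_eigenvalues_eq_of_charpoly_eq_prod {A : Matrix m m ℂ} (hA : A.IsHermitian)
    {d : κ → ℝ} (h : A.charpoly = ∏ k, (X - C (d k : ℂ))) :
    Finset.univ.val.map hA.eigenvalues = Finset.univ.val.map d := by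
  have hroots := hA.roots_charpoly_eq_eigenvalues
  rw [h, roots_univ_prod_X_sub_C] at hroots
  apply Multiset.map_injective Complex.ofReal_injective
  rw [Multiset.map_map, Multiset.map_map]
  exact hroots.symm

lemma vnEntropy_eq_of_charpoly_eq_prod {A : Matrix m m ℂ} (hA : A.IsHermitian) {d : κ → ℝ}
    (h : A.charpoly = ∏ k, (X - C (d k : ℂ))) :
    vnEntropy A = -∑ k, d k * Real.logb 2 (d k) := by
  have hsum := congrArg (fun s => (s.map fun x => x * Real.logb 2 x).sum)
    (hA.map_eigenvalues_eq_of_charpoly_eq_prod h)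
  simp only [Multiset.map_map, Function.comp_def, Finset.sum_map_val] at hsum
  rw [vnEntropy, dif_pos hA, hsum]

lemma charpoly_kronecker {A : Matrix m m ℂ} {B : Matrix n n ℂ} (hA : A.IsHermitian)
    (hB : B.IsHermitian) :
    (A ⊗ₖ B).charpoly =
      ∏ p : m × n, (X - C ((hA.eigenvalues p.1 * hB.eigenvalues p.2 : ℝ) : ℂ)) := by
  set U : Matrix m m ℂ := (hA.eigenvectorUnitary : Matrix m m ℂ)
  set V : Matrix n n ℂ := (hB.eigenvectorUnitary : Matrix n n ℂ)
  have hU : star U * U = 1 := Unitary.coe_star_mul_self _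
  have hV : star V * V = 1 := Unitary.coe_star_mul_self _
  have hAB : A ⊗ₖ B = (U ⊗ₖ V) * (diagonal (RCLike.ofReal ∘ hA.eigenvalues) ⊗ₖ
      diagonal (RCLike.ofReal ∘ hB.eigenvalues)) * (star U ⊗ₖ star V) := by
    conv_lhs => rw [hA.spectral_theorem, hB.spectral_theorem]
    simp only [Unitary.conjStarAlgAut_apply, mul_kronecker_mul, U, V]
  rw [hAB, charpoly_mul_comm, ← mul_assoc, ← mul_kronecker_mul, hU, hV, one_kronecker_one,
    one_mul, diagonal_kronecker_diagonal, charpoly_diagonal]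
  simp

lemma sum_eigenvalues_eq_one {A : Matrix m m ℂ} (hA : A.IsHermitian) (htr : A.trace = 1) :
    ∑ i, hA.eigenvalues i = 1 := by
  rw [hA.trace_eq_sum_eigenvalues, ← RCLike.ofReal_sum] at htr
  exact Complex.ofReal_eq_one.mp htr

lemma vnEntropy_kronecker {A : Matrix m m ℂ} {B : Matrix n n ℂ} (hA : A.IsHermitian)
    (hB : B.IsHermitian) (htrA : A.trace = 1) (htrB : B.trace = 1) :
    vnEntropy (A ⊗ₖ B) = vnEntropy A + vnEntropy B := by
  rw [(hA.kronecker hB).vnEntropy_eq_of_charpoly_eq_prod (hA.charpoly_kronecker hB),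
    Real.sum_mul_logb_prod 2 (hA.sum_eigenvalues_eq_one htrA) (hB.sum_eigenvalues_eq_one htrB),
    vnEntropy, dif_pos hA, vnEntropy, dif_pos hB]
  ring

end Matrix.IsHermitian

lemma vnEntropy_reindex {m n : Type*} [Fintype m] [DecidableEq m] [Fintype n] [DecidableEq n]
    (e : m ≃ n) (A : Matrix m m ℂ) : vnEntropy (reindex e e A) = vnEntropy A := by
  by_cases hA : A.IsHermitian
  · have hA' : (reindex e e A).IsHermitian := (isHermitian_submatrix_equiv e.symm).mpr hA
    have hcharpoly : (reindex e e A).charpoly = ∏ i, (X - C (hA.eigenvalues i : ℂ)) := by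
      rw [charpoly_reindex, hA.charpoly_eq]
      rfl
    rw [hA'.vnEntropy_eq_of_charpoly_eq_prod hcharpoly, vnEntropy, dif_pos hA]
  · have hA' : ¬(reindex e e A).IsHermitian := by
      rwa [reindex_apply, isHermitian_submatrix_equiv]
    rw [vnEntropy, dif_neg hA', vnEntropy, dif_neg hA]

lemma single_kronecker_one_eq_diagonal {A B : Type*} [DecidableEq A] [DecidableEq B] (c : A) :
    single c c (1 : ℂ) ⊗ₖ (1 : Matrix B B ℂ) = diagonal fun x => if x.1 = c then 1 else 0 := by
  rw [← diagonal_single, ← diagonal_one, diagonal_kronecker_diagonal]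
  simp [Pi.single_apply]

section Dephasing

variable {A B : Type*} [Fintype A] [DecidableEq A] [Fintype B] [DecidableEq B]

lemma dephA_apply (ρ : Matrix (A × B) (A × B) ℂ) (x y : A × B) :
    dephA ρ x y = if x.1 = y.1 then ρ x y else 0 := by
  simp [dephA, Matrix.sum_apply, single_kronecker_one_eq_diagonal, diagonal_mul, mul_diagonal,
    ite_mul, mul_ite]

lemma Matrix.IsHermitian.dephA {ρ : Matrix (A × B) (A × B) ℂ} (hρ : ρ.IsHermitian) :
    (dephA ρ).IsHermitian := by
  ext x y
  simp only [conjTranspose_apply, dephA_apply, eq_comm (a := y.1), apply_ite star, star_zero,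
    hρ.apply]

lemma trace_dephA (ρ : Matrix (A × B) (A × B) ℂ) : (dephA ρ).trace = ρ.trace := by
  simp [trace, dephA_apply]

lemma dephA_reindex_kronecker {A' B' : Type*} [Fintype A'] [DecidableEq A'] [Fintype B']
    [DecidableEq B'] (ρ : Matrix (A × B) (A × B) ℂ) (ρ' : Matrix (A' × B') (A' × B') ℂ) :
    dephA (reindex (Equiv.prodProdProdComm A B A' B') (Equiv.prodProdProdComm A B A' B')
        (ρ ⊗ₖ ρ')) =
      reindex (Equiv.prodProdProdComm A B A' B') (Equiv.prodProdProdComm A B A' B')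
        (dephA ρ ⊗ₖ dephA ρ') := by
  ext ⟨⟨a, a'⟩, ⟨b, b'⟩⟩ ⟨⟨c, c'⟩, ⟨d, d'⟩⟩
  by_cases h : a = c <;> by_cases h' : a' = c' <;> simp [dephA_apply, h, h']

end Dephasing

/-- **Additivity of `Δ_Z`.** For density matrices `ρ₁` on
`ℂ^{d_{A₁}} ⊗ ℂ^{d_{B₁}}` and `ρ₂` on `ℂ^{d_{A₂}} ⊗ ℂ^{d_{B₂}}`, regarding the Kronecker
product `ρ₁ ⊗ ρ₂` as a state on `ℂ^{d_{A₁}d_{A₂}} ⊗ ℂ^{d_{B₁}d_{B₂}}` via the index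
bijection `((a₁,b₁),(a₂,b₂)) ↦ ((a₁,a₂),(b₁,b₂))` (with the product computational basis
as the incoherent basis on `A₁A₂`), we have `Δ_Z(ρ₁ ⊗ ρ₂) = Δ_{Z₁}(ρ₁) + Δ_{Z₂}(ρ₂)`. -/
theorem DeltaZ_additive (dA1 dB1 dA2 dB2 : ℕ)
    (ρ1 : Matrix (Fin dA1 × Fin dB1) (Fin dA1 × Fin dB1) ℂ) (h1 : IsDensity ρ1)
    (ρ2 : Matrix (Fin dA2 × Fin dB2) (Fin dA2 × Fin dB2) ℂ) (h2 : IsDensity ρ2) :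
    DeltaZ (Matrix.reindex
        (Equiv.prodProdProdComm (Fin dA1) (Fin dB1) (Fin dA2) (Fin dB2))
        (Equiv.prodProdProdComm (Fin dA1) (Fin dB1) (Fin dA2) (Fin dB2))
        (ρ1 ⊗ₖ ρ2)) = DeltaZ ρ1 + DeltaZ ρ2 := by
  have hH1 := h1.1.isHermitian
  have hH2 := h2.1.isHermitian
  rw [DeltaZ, DeltaZ, DeltaZ, dephA_reindex_kronecker, vnEntropy_reindex, vnEntropy_reindex,
    hH1.dephA.vnEntropy_kronecker hH2.dephA ((trace_dephA ρ1).trans h1.2)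
      ((trace_dephA ρ2).trans h2.2),
    hH1.vnEntropy_kronecker hH2 h1.2 h2.2]
  ring
end
end

section
/- (Invariance of Δ_Z under controlled unitaries) Let U = ∑_c |c⟩⟨c| ⊗ U_c be a controlled unitary on ℂ^{d_A} ⊗ ℂ^{d_B}, where each U_c ∈ M_{d_B}(ℂ) is unitary and the sum is over the computational basis Z of ℂ^{d_A}. Then for every density matrix ρ on ℂ^{d_A} ⊗ ℂ^{d_B}, Δ_Z(U ρ U†) = Δ_Z(ρ). -/
open scoped Classical ComplexOrder
open Matrix Kronecker BigOperators

noncomputable section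

/-! A controlled unitary `W = ∑ c, |c⟩⟨c| ⊗ U c` commutes with every projector `|c⟩⟨c| ⊗ I`,
hence with the dephasing: `Δ(W ρ W†) = W Δ(ρ) W†`. Unitary conjugation preserves the
characteristic polynomial, hence the eigenvalues and the von Neumann entropy, so both terms of
`Δ_Z` are unchanged. -/

section UnitaryConj

variable {n R : Type*} [Fintype n] [DecidableEq n]

lemma isHermitian_mul_mul_conjTranspose_iff [Semiring R] [StarRing R] {V : Matrix n n R}
    (hV : Vᴴ * V = 1) {M : Matrix n n R} :
    (V * M * Vᴴ).IsHermitian ↔ M.IsHermitian := by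
  refine ⟨fun h => ?_, isHermitian_mul_mul_conjTranspose V⟩
  have hM : Vᴴ * (V * M * Vᴴ) * V = M := by
    rw [Matrix.mul_assoc, Matrix.mul_assoc, hV, Matrix.mul_one, ← Matrix.mul_assoc, hV,
      Matrix.one_mul]
  simpa only [hM, conjTranspose_conjTranspose] using isHermitian_conjTranspose_mul_mul V h

lemma charpoly_mul_mul_conjTranspose [CommRing R] [StarRing R] {V : Matrix n n R}
    (hV : Vᴴ * V = 1) (M : Matrix n n R) :
    (V * M * Vᴴ).charpoly = M.charpoly := by
  rw [Matrix.mul_assoc, charpoly_mul_comm, Matrix.mul_assoc, hV, Matrix.mul_one]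

lemma vnEntropy_mul_mul_conjTranspose {V : Matrix n n ℂ} (hV : Vᴴ * V = 1) (M : Matrix n n ℂ) :
    vnEntropy (V * M * Vᴴ) = vnEntropy M := by
  by_cases hM : M.IsHermitian
  · have hVM := (isHermitian_mul_mul_conjTranspose_iff hV).2 hM
    rw [vnEntropy, vnEntropy, dif_pos hVM, dif_pos hM,
      (hVM.eigenvalues_eq_eigenvalues_iff hM).2 (charpoly_mul_mul_conjTranspose hV M)]
  · rw [vnEntropy, vnEntropy, dif_neg hM,
      dif_neg (mt (isHermitian_mul_mul_conjTranspose_iff hV).1 hM)]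

end UnitaryConj

section Controlled

variable {A B R : Type*} [Fintype A] [DecidableEq A]

/-- The block-diagonal operator `∑ c, |c⟩⟨c| ⊗ f c`; the projector `|c⟩⟨c| ⊗ I` of the
dephasing is `controlled (Pi.single c 1)`. -/
def controlled [CommSemiring R] (f : A → Matrix B B R) : Matrix (A × B) (A × B) R :=
  ∑ c, single c c (1 : R) ⊗ₖ f c

lemma controlled_pi_single [CommSemiring R] (c : A) (N : Matrix B B R) :
    controlled (Pi.single c N) = single c c (1 : R) ⊗ₖ N := by
  rw [controlled, Finset.sum_eq_single c (fun d _ hd => by simp [hd]) (by simp),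
    Pi.single_eq_same]

lemma controlled_mul [CommSemiring R] [Fintype B] (f g : A → Matrix B B R) :
    controlled f * controlled g = controlled (f * g) := by
  simp only [controlled, Finset.sum_mul_sum, ← mul_kronecker_mul]
  refine Finset.sum_congr rfl fun c _ => ?_
  rw [Finset.sum_eq_single c
      (fun d _ hd => by rw [single_mul_single_of_ne (h := hd.symm), zero_kronecker]) (by simp),
    single_mul_single_same, one_mul, Pi.mul_apply]

lemma controlled_one [CommSemiring R] [DecidableEq B] :
    controlled (1 : A → Matrix B B R) = 1 := by
  ext ⟨a, b⟩ ⟨a', b'⟩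
  simp only [controlled, Matrix.sum_apply, kroneckerMap_apply, Pi.one_apply, single_apply,
    one_apply, Prod.mk.injEq]
  rw [Finset.sum_eq_single a (fun c _ hc => by simp [hc]) (by simp)]
  by_cases ha : a = a' <;> simp [ha]

lemma conjTranspose_controlled [CommSemiring R] [StarRing R] (f : A → Matrix B B R) :
    (controlled f)ᴴ = controlled (star f) := by
  simp only [controlled, conjTranspose_sum, conjTranspose_kronecker, conjTranspose_single,
    star_one]
  rfl

lemma conjTranspose_controlled_mul_self [CommSemiring R] [StarRing R] [Fintype B] [DecidableEq B]
    {f : A → Matrix B B R} (hf : ∀ c, (f c)ᴴ * f c = 1) :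
    (controlled f)ᴴ * controlled f = 1 := by
  rw [conjTranspose_controlled, controlled_mul, ← controlled_one]
  exact congrArg controlled (funext hf)

lemma controlled_commute_pi_single [CommSemiring R] [Fintype B] [DecidableEq B]
    (f : A → Matrix B B R) (c : A) :
    Commute (controlled f) (controlled (Pi.single c 1)) := by
  rw [Commute, SemiconjBy, controlled_mul, controlled_mul, ← Pi.single_mul_right,
    ← Pi.single_mul_left, one_mul, mul_one]

variable [Fintype B] [DecidableEq B]

lemma dephA_eq_sum_controlled (ρ : Matrix (A × B) (A × B) ℂ) :
    dephA ρ = ∑ c, controlled (Pi.single c 1) * ρ * controlled (Pi.single c 1) := by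
  simp only [dephA, controlled_pi_single]

lemma dephA_mul_mul_conjTranspose_controlled (f : A → Matrix B B ℂ)
    (ρ : Matrix (A × B) (A × B) ℂ) :
    dephA (controlled f * ρ * (controlled f)ᴴ) = controlled f * dephA ρ * (controlled f)ᴴ := by
  simp only [dephA_eq_sum_controlled, Finset.mul_sum, Finset.sum_mul]
  refine Finset.sum_congr rfl fun c _ => ?_
  rw [conjTranspose_controlled]
  set P := controlled (Pi.single c (1 : Matrix B B ℂ))
  have hPW : P * controlled f = controlled f * P := (controlled_commute_pi_single f c).eq.symm
  have hW'P : controlled (star f) * P = P * controlled (star f) :=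
    (controlled_commute_pi_single (star f) c).eq
  calc P * (controlled f * ρ * controlled (star f)) * P
      = (P * controlled f) * ρ * (controlled (star f) * P) := by simp only [Matrix.mul_assoc]
    _ = (controlled f * P) * ρ * (P * controlled (star f)) := by rw [hPW, hW'P]
    _ = controlled f * (P * ρ * P) * controlled (star f) := by simp only [Matrix.mul_assoc]

lemma DeltaZ_mul_mul_conjTranspose_controlled {f : A → Matrix B B ℂ}
    (hf : ∀ c, (f c)ᴴ * f c = 1) (ρ : Matrix (A × B) (A × B) ℂ) :
    DeltaZ (controlled f * ρ * (controlled f)ᴴ) = DeltaZ ρ := by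
  have hW := conjTranspose_controlled_mul_self hf
  rw [DeltaZ, DeltaZ, dephA_mul_mul_conjTranspose_controlled,
    vnEntropy_mul_mul_conjTranspose hW, vnEntropy_mul_mul_conjTranspose hW]

end Controlled

theorem DeltaZ_ctrlUnitary_invariant_general (dA dB : ℕ)
    (U : Fin dA → Matrix (Fin dB) (Fin dB) ℂ)
    (hU : ∀ c, U c * (U c)ᴴ = 1 ∧ (U c)ᴴ * U c = 1)
    (ρ : Matrix (Fin dA × Fin dB) (Fin dA × Fin dB) ℂ) :
    DeltaZ ((∑ c, Matrix.single c c (1 : ℂ) ⊗ₖ U c) * ρ *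
      (∑ c, Matrix.single c c (1 : ℂ) ⊗ₖ U c)ᴴ) = DeltaZ ρ :=
  DeltaZ_mul_mul_conjTranspose_controlled (fun c => (hU c).2) ρ

/-- **Invariance of `Δ_Z` under controlled unitaries.** If
`U = ∑ c |c⟩⟨c| ⊗ U_c` is a controlled unitary (each `U_c` unitary), then for every
density matrix `ρ` on `ℂ^{d_A} ⊗ ℂ^{d_B}`, `Δ_Z(U ρ U†) = Δ_Z(ρ)`. -/
theorem DeltaZ_ctrlUnitary_invariant (dA dB : ℕ)
    (U : Fin dA → Matrix (Fin dB) (Fin dB) ℂ)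
    (hU : ∀ c, U c * (U c)ᴴ = 1 ∧ (U c)ᴴ * U c = 1)
    (ρ : Matrix (Fin dA × Fin dB) (Fin dA × Fin dB) ℂ) (hρ : IsDensity ρ) :
    DeltaZ ((∑ c, Matrix.single c c (1 : ℂ) ⊗ₖ U c) * ρ *
      (∑ c, Matrix.single c c (1 : ℂ) ⊗ₖ U c)ᴴ) = DeltaZ ρ :=
  DeltaZ_ctrlUnitary_invariant_general dA dB U hU ρ
end
end

section
/- (Quantum-classical states) Let ρ = ∑_{k=0}^{d_B−1} p_k ρ_k ⊗ |k⟩⟨k| be a density matrix on ℂ^{d_A} ⊗ ℂ^{d_B}, where p_k ≥ 0, ∑_k p_k = 1, each ρ_k is a density matrix on ℂ^{d_A}, and {|k⟩} is the computational basis of ℂ^{d_B}. Then Δ_Z(ρ) = ∑_k p_k C(ρ_k), where C is the relative entropy of coherence on ℂ^{d_A}. -/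
open scoped Classical ComplexOrder
open Matrix Kronecker BigOperators

noncomputable section

/-- The relative entropy of coherence with respect to the computational basis:
`C(τ) = S(diag(τ)) − S(τ)`, where `diag(τ)` is `τ` with the off-diagonal entries set to zero. -/
noncomputable def relCoh {n : Type*} [Fintype n] [DecidableEq n]
    (τ : Matrix n n ℂ) : ℝ :=
  vnEntropy (Matrix.diagonal fun i => τ i i) - vnEntropy τ

/-! `ρ` is block diagonal with blocks `pₖ ρₖ`. Conjugating by the block-diagonal unitary built from
eigenvector unitaries of the `ρₖ` diagonalizes it with spectrum `{pₖ λₖᵢ}`, while `Δ(ρ)` is diagonal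
with entries `pₖ (ρₖ)ᵢᵢ`. The chain rule for `-∑ (pₖ xₖᵢ) log (pₖ xₖᵢ)` splits both entropies into a
`p`-part weighted by `∑ᵢ xₖᵢ` and `∑ₖ pₖ H(xₖ)`; since `∑ᵢ λₖᵢ = tr ρₖ = ∑ᵢ (ρₖ)ᵢᵢ`, the `p`-parts
cancel in `Δ_Z(ρ)`, leaving `∑ₖ pₖ C(ρₖ)`. -/

def shannonEntropy {ι : Type*} [Fintype ι] (x : ι → ℝ) : ℝ :=
  -∑ i, x i * Real.logb 2 (x i)

/-- No sign conditions: `Real.log` is `log |·|` and vanishes at `0`. -/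
lemma mul_logb_mul (q x : ℝ) :
    q * x * Real.logb 2 (q * x) = x * (q * Real.logb 2 q) + q * (x * Real.logb 2 x) := by
  have h := Real.negMulLog_mul q x
  simp only [Real.negMulLog, Real.logb] at h ⊢
  linear_combination (-1 / Real.log 2) * h

lemma shannonEntropy_mul_prod {ι κ : Type*} [Fintype ι] [Fintype κ] (q : κ → ℝ) (x : κ → ι → ℝ) :
    shannonEntropy (fun z : ι × κ => q z.2 * x z.2 z.1) =
      -∑ k, (∑ i, x k i) * (q k * Real.logb 2 (q k)) + ∑ k, q k * shannonEntropy (x k) := by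
  simp only [shannonEntropy, mul_logb_mul, Fintype.sum_prod_type_right, Finset.sum_add_distrib,
    ← Finset.sum_mul, ← Finset.mul_sum, mul_neg, Finset.sum_neg_distrib, neg_add]

section Spectrum

open Polynomial

variable {n : Type*} [Fintype n] [DecidableEq n] {τ : Matrix n n ℂ}

lemma Matrix.IsHermitian.vnEntropy_eq (hτ : τ.IsHermitian) :
    vnEntropy τ = shannonEntropy hτ.eigenvalues :=
  dif_pos hτ

lemma vnEntropy_eq_of_charpoly_eq (hτ : τ.IsHermitian) (d : n → ℝ)
    (h : τ.charpoly = ∏ i, (X - C (d i : ℂ))) : vnEntropy τ = shannonEntropy d := by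
  have hroots : Finset.univ.val.map (fun i => (d i : ℂ)) =
      Finset.univ.val.map (fun i => (hτ.eigenvalues i : ℂ)) := by
    have := hτ.roots_charpoly_eq_eigenvalues
    rw [h, roots_prod _ _ (by simp [Finset.prod_ne_zero_iff, X_sub_C_ne_zero])] at this
    simpa using this
  have := congrArg (fun s => (s.map fun z : ℂ => z.re * Real.logb 2 z.re).sum) hroots
  simp only [Multiset.map_map, Function.comp_def, Complex.ofReal_re] at this
  rw [hτ.vnEntropy_eq, shannonEntropy, shannonEntropy, Finset.sum_eq_multiset_sum,
    Finset.sum_eq_multiset_sum, this]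

lemma vnEntropy_diagonal (d : n → ℝ) :
    vnEntropy (diagonal fun i => (d i : ℂ)) = shannonEntropy d :=
  vnEntropy_eq_of_charpoly_eq (isHermitian_diagonal_of_self_adjoint _ (by ext; simp)) d
    (charpoly_diagonal _)

lemma vnEntropy_unitary_conj_diagonal {U : Matrix n n ℂ} (hU : U ∈ unitaryGroup n ℂ)
    (d : n → ℝ) : vnEntropy (U * diagonal (fun i => (d i : ℂ)) * Uᴴ) = shannonEntropy d := by
  have hdiag : (diagonal fun i => (d i : ℂ)).IsHermitian :=
    isHermitian_diagonal_of_self_adjoint _ (by ext; simp)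
  refine vnEntropy_eq_of_charpoly_eq (isHermitian_mul_mul_conjTranspose U hdiag) d ?_
  rw [charpoly_mul_comm, ← mul_assoc, ← star_eq_conjTranspose, mem_unitaryGroup_iff'.mp hU,
    one_mul, charpoly_diagonal]

lemma Matrix.IsHermitian.relCoh_eq (hτ : τ.IsHermitian) :
    relCoh τ = shannonEntropy (fun i => (τ i i).re) - shannonEntropy hτ.eigenvalues := by
  have hdiag : (fun i => τ i i) = fun i => ((τ i i).re : ℂ) :=
    funext fun i => (hτ.coe_re_apply_self i).symm
  rw [relCoh, hdiag, vnEntropy_diagonal, hτ.vnEntropy_eq]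

lemma Matrix.IsHermitian.sum_eigenvalues_eq_sum_re_diag (hτ : τ.IsHermitian) :
    ∑ i, hτ.eigenvalues i = ∑ i, (τ i i).re := by
  simpa [trace, Complex.re_sum] using congrArg Complex.re hτ.trace_eq_sum_eigenvalues.symm

end Spectrum

section Blocks

variable {m o : Type*} [Fintype o] [DecidableEq o]

lemma sum_kronecker_single_eq_blockDiagonal {α : Type*} [Semiring α] (M : o → Matrix m m α) :
    ∑ k, M k ⊗ₖ single k k (1 : α) = blockDiagonal M := by
  ext ⟨i, k⟩ ⟨j, k'⟩
  simp only [Matrix.sum_apply, kroneckerMap_apply, single_apply, blockDiagonal_apply']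
  by_cases h : k = k' <;> simp [h, ite_and]

variable [Fintype m] [DecidableEq m]

lemma blockDiagonal_mem_unitaryGroup {α : Type*} [CommRing α] [StarRing α]
    {U : o → Matrix m m α} (hU : ∀ k, U k ∈ unitaryGroup m α) :
    blockDiagonal U ∈ unitaryGroup (m × o) α := by
  rw [mem_unitaryGroup_iff, star_eq_conjTranspose, blockDiagonal_conjTranspose, ← blockDiagonal_mul]
  simp_rw [← star_eq_conjTranspose, fun k => mem_unitaryGroup_iff.mp (hU k)]
  exact blockDiagonal_one

lemma dephA_blockDiagonal (M : o → Matrix m m ℂ) :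
    dephA (blockDiagonal M) = diagonal fun z => M z.2 z.1 z.1 := by
  ext ⟨i, k⟩ ⟨j, k'⟩
  simp only [dephA, Matrix.sum_apply, Matrix.mul_apply, Fintype.sum_prod_type,
    kroneckerMap_apply, one_apply, single_apply, blockDiagonal_apply', diagonal_apply]
  by_cases h : k = k' <;> by_cases h' : i = j <;> simp [h, h', eq_comm, ite_and]

lemma vnEntropy_blockDiagonal_smul {M : o → Matrix m m ℂ} (hM : ∀ k, (M k).IsHermitian)
    (q : o → ℝ) :
    vnEntropy (blockDiagonal fun k => (q k : ℂ) • M k) =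
      shannonEntropy fun z : m × o => q z.2 * (hM z.2).eigenvalues z.1 := by
  let U k : Matrix m m ℂ := (hM k).eigenvectorUnitary
  have hblock : (blockDiagonal fun k => (q k : ℂ) • M k) =
      blockDiagonal U * diagonal (fun z : m × o => ((q z.2 * (hM z.2).eigenvalues z.1 : ℝ) : ℂ)) *
        (blockDiagonal U)ᴴ := by
    rw [blockDiagonal_conjTranspose,
      ← blockDiagonal_diagonal fun k i => ((q k * (hM k).eigenvalues i : ℝ) : ℂ),
      ← blockDiagonal_mul, ← blockDiagonal_mul]
    congr 1
    ext1 k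
    rw [congrArg ((q k : ℂ) • ·) (hM k).spectral_theorem, Unitary.conjStarAlgAut_apply,
      ← Matrix.smul_mul, ← Matrix.mul_smul, ← diagonal_smul, star_eq_conjTranspose]
    congr 3
    ext i
    simp
  rw [hblock, vnEntropy_unitary_conj_diagonal
    (blockDiagonal_mem_unitaryGroup fun k => (hM k).eigenvectorUnitary.2)]

lemma vnEntropy_dephA_blockDiagonal_smul {M : o → Matrix m m ℂ} (hM : ∀ k, (M k).IsHermitian)
    (q : o → ℝ) :
    vnEntropy (dephA (blockDiagonal fun k => (q k : ℂ) • M k)) =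
      shannonEntropy fun z : m × o => q z.2 * (M z.2 z.1 z.1).re := by
  rw [dephA_blockDiagonal, ← vnEntropy_diagonal]
  congr
  ext1 z
  rw [Matrix.smul_apply, smul_eq_mul, Complex.ofReal_mul]
  exact congrArg _ ((hM z.2).coe_re_apply_self z.1).symm

end Blocks

theorem DeltaZ_quantumClassical_general (dA dB : ℕ)
    (p : Fin dB → ℝ)
    (ρs : Fin dB → Matrix (Fin dA) (Fin dA) ℂ) (hρs : ∀ k, IsDensity (ρs k)) :
    DeltaZ (∑ k, (p k : ℂ) • (ρs k ⊗ₖ Matrix.single k k (1 : ℂ))) =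
      ∑ k, p k * relCoh (ρs k) := by
  have hherm k : (ρs k).IsHermitian := (hρs k).1.1
  simp_rw [← smul_kronecker, sum_kronecker_single_eq_blockDiagonal]
  rw [DeltaZ, vnEntropy_dephA_blockDiagonal_smul hherm, vnEntropy_blockDiagonal_smul hherm,
    shannonEntropy_mul_prod p (fun k i => (ρs k i i).re),
    shannonEntropy_mul_prod p (fun k => (hherm k).eigenvalues)]
  simp only [(hherm _).relCoh_eq, (hherm _).sum_eigenvalues_eq_sum_re_diag, mul_sub,
    Finset.sum_sub_distrib]
  ring

/-- **Quantum-classical states.** For a quantum-classical state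
`ρ = ∑ₖ pₖ ρₖ ⊗ |k⟩⟨k|` (with `pₖ ≥ 0`, `∑ₖ pₖ = 1` and each `ρₖ` a density matrix on
`ℂ^{d_A}`), one has `Δ_Z(ρ) = ∑ₖ pₖ C(ρₖ)`, where `C` is the relative entropy of
coherence on `ℂ^{d_A}`. -/
theorem DeltaZ_quantumClassical (dA dB : ℕ)
    (p : Fin dB → ℝ) (hp : ∀ k, 0 ≤ p k) (hp1 : ∑ k, p k = 1)
    (ρs : Fin dB → Matrix (Fin dA) (Fin dA) ℂ) (hρs : ∀ k, IsDensity (ρs k)) :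
    DeltaZ (∑ k, (p k : ℂ) • (ρs k ⊗ₖ Matrix.single k k (1 : ℂ))) =
      ∑ k, p k * relCoh (ρs k) :=
  DeltaZ_quantumClassical_general dA dB p ρs hρs
end
end

section
/- (Intersection of all classical-quantum lobes) Let ρ be a density matrix on ℂ^{d_A} ⊗ ℂ^{d_B}. Then ρ satisfies ρ = ∑_c (W|c⟩⟨c|W† ⊗ I_B) ρ (W|c⟩⟨c|W† ⊗ I_B) for every unitary W ∈ M_{d_A}(ℂ) (i.e. ρ is a classical-quantum state with respect to every orthonormal basis of ℂ^{d_A}) if and only if ρ = (1/d_A) I_{d_A} ⊗ ρ_B for some density matrix ρ_B on ℂ^{d_B}. -/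
open scoped Classical ComplexOrder
open Matrix Kronecker BigOperators

noncomputable section

/-- The dephasing map on `A` in the rotated basis `{W|c⟩}`:
`P_W(ρ) = ∑ c (W|c⟩⟨c|W† ⊗ I_B) ρ (W|c⟩⟨c|W† ⊗ I_B)`. -/
noncomputable def pinchW {A B : Type*} [Fintype A] [DecidableEq A] [Fintype B] [DecidableEq B]
    (W : Matrix A A ℂ) (ρ : Matrix (A × B) (A × B) ℂ) : Matrix (A × B) (A × B) ℂ :=
  ∑ c : A, ((W * Matrix.single c c (1 : ℂ) * Wᴴ) ⊗ₖ (1 : Matrix B B ℂ)) * ρ *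
    ((W * Matrix.single c c (1 : ℂ) * Wᴴ) ⊗ₖ (1 : Matrix B B ℂ))

/-! If `P_W(ρ) = ρ`, then `ρ` commutes with every projection `W|c⟩⟨c|W† ⊗ I`, since a fixed point
of a pinching by orthogonal projections commutes with each of them. Taking `W = I` gives the
projections `|a⟩⟨a| ⊗ I`; taking a unitary whose column `a` has nonzero entries at `a` and `a'`,
and sandwiching its rotated projection between `|a⟩⟨a|` and `|a'⟩⟨a'|`, gives `|a⟩⟨a'| ⊗ I`.
Commuting with every matrix unit `|a⟩⟨a'| ⊗ I` forces `ρ = I ⊗ σ`, and the trace fixes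
`σ = ρ_B / d_A`. Conversely `I ⊗ σ` is fixed because the rotated projections sum to `I`. -/

theorem commute_of_sum_mul_mul_eq_self {ι R : Type*} [Fintype ι] [NonUnitalSemiring R]
    {Q : ι → R} {x : R} (hidem : ∀ c, Q c * Q c = Q c)
    (horth : Pairwise fun c d => Q c * Q d = 0) (hfix : ∑ c, Q c * x * Q c = x) (d : ι) :
    Commute (Q d) x := by
  have hleft : Q d * x = Q d * x * Q d := by
    conv_lhs => rw [← hfix]
    rw [Finset.mul_sum, Finset.sum_eq_single d (fun c _ hc => by
      rw [← mul_assoc, ← mul_assoc, horth hc.symm, zero_mul, zero_mul]) (by simp),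
      ← mul_assoc, ← mul_assoc, hidem]
  have hright : x * Q d = Q d * x * Q d := by
    conv_lhs => rw [← hfix]
    rw [Finset.sum_mul, Finset.sum_eq_single d (fun c _ hc => by
      rw [mul_assoc, horth hc, mul_zero]) (by simp), mul_assoc, hidem]
  exact hleft.trans hright.symm

section Matrix

variable {R A B : Type*} [Fintype A] [Fintype B] [DecidableEq B]

theorem Commute.mul_kronecker_one [CommSemiring R] {X Y : Matrix A A R}
    {ρ : Matrix (A × B) (A × B) R} (hX : Commute (X ⊗ₖ (1 : Matrix B B R)) ρ)
    (hY : Commute (Y ⊗ₖ (1 : Matrix B B R)) ρ) : Commute ((X * Y) ⊗ₖ (1 : Matrix B B R)) ρ := by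
  rw [← Matrix.mul_one (1 : Matrix B B R), mul_kronecker_mul]
  exact hX.mul_left hY

variable [DecidableEq A]

theorem conj_mul_conj_of_conjTranspose_mul_self [Semiring R] [Star R] {W : Matrix A A R}
    (hW : Wᴴ * W = 1) (X Y : Matrix A A R) :
    W * X * Wᴴ * (W * Y * Wᴴ) = W * (X * Y) * Wᴴ := by
  simp only [Matrix.mul_assoc]
  rw [← Matrix.mul_assoc Wᴴ, hW, Matrix.one_mul]

theorem mul_single_mul_conjTranspose_apply [Semiring R] [Star R] (W : Matrix A A R) (c i j : A) :
    (W * single c c (1 : R) * Wᴴ) i j = W i c * star (W j c) := by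
  simp [mul_apply, single_apply, ite_and]

theorem eq_one_kronecker_of_forall_commute [CommSemiring R] {ρ : Matrix (A × B) (A × B) R}
    (hρ : ∀ a a', Commute (single a a' (1 : R) ⊗ₖ (1 : Matrix B B R)) ρ) (a₀ : A) :
    ρ = 1 ⊗ₖ ρ.submatrix (a₀, ·) (a₀, ·) := by
  ext ⟨i, b⟩ ⟨j, b'⟩
  have h := congrFun (congrFun (hρ a₀ i) (a₀, b)) (j, b')
  simp [mul_apply, Fintype.sum_prod_type, single_apply, one_apply, ite_and] at h
  simpa [one_apply] using h

theorem smul_one_add_smul_mul [CommRing R] {S : Matrix A A R} (hS : S * S = 1) (α β γ δ : R) :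
    (α • 1 + β • S) * (γ • 1 + δ • S) = (α * γ + β * δ) • 1 + (α * δ + β * γ) • S := by
  simp only [add_mul, mul_add, smul_mul_smul, Matrix.one_mul, Matrix.mul_one, hS]
  module

end Matrix

section SwapMixer

variable {A : Type*} [DecidableEq A]

open Complex

/-- `(1 + i)/2 • I + (1 - i)/2 • S` is unitary for every self-adjoint involution `S`; here `S` is
the transposition matrix of `a` and `a'`. -/
def swapMixer (a a' : A) : Matrix A A ℂ :=
  ((1 + I) / 2) • 1 + ((1 - I) / 2) • (Equiv.swap a a').permMatrix ℂ

theorem swapMixer_apply_self {a a' : A} (h : a ≠ a') : swapMixer a a' a a = (1 + I) / 2 := by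
  simp [swapMixer, h.symm]

theorem swapMixer_apply_swap {a a' : A} (h : a ≠ a') : swapMixer a a' a' a = (1 - I) / 2 := by
  simp [swapMixer, h.symm]

variable [Fintype A]

theorem swapMixer_unitary (a a' : A) :
    swapMixer a a' * (swapMixer a a')ᴴ = 1 ∧ (swapMixer a a')ᴴ * swapMixer a a' = 1 := by
  set S := (Equiv.swap a a').permMatrix ℂ
  have hS : S * S = 1 := by simp [S, ← permMatrix_mul]
  have hW : (swapMixer a a')ᴴ = ((1 - I) / 2) • 1 + ((1 + I) / 2) • S := by
    simp [S, swapMixer, Equiv.swap_inv, sub_eq_add_neg]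
  have h₁ : (1 + I) / 2 * ((1 - I) / 2) = 2⁻¹ := by linear_combination (-1 / 4 : ℂ) * I_sq
  have h₀ : (1 - I) / 2 * ((1 - I) / 2) + (1 + I) / 2 * ((1 + I) / 2) = 0 := by
    linear_combination (1 / 2 : ℂ) * I_sq
  rw [hW, swapMixer, smul_one_add_smul_mul hS, smul_one_add_smul_mul hS]
  simp only [mul_comm ((1 - I) / 2), h₁, add_comm ((1 + I) / 2 * ((1 + I) / 2)), h₀]
  norm_num

end SwapMixer

section Pinching

variable {A B : Type*} [Fintype A] [DecidableEq A] [Fintype B] [DecidableEq B]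

theorem commute_kronecker_one_of_pinchW_eq {W : Matrix A A ℂ} (hW : Wᴴ * W = 1)
    {ρ : Matrix (A × B) (A × B) ℂ} (hfix : pinchW W ρ = ρ) (c : A) :
    Commute ((W * single c c 1 * Wᴴ) ⊗ₖ (1 : Matrix B B ℂ)) ρ := by
  refine commute_of_sum_mul_mul_eq_self
    (Q := fun c => (W * single c c 1 * Wᴴ) ⊗ₖ (1 : Matrix B B ℂ)) (fun c => ?_)
    (fun c d hcd => ?_) hfix c
  · rw [← mul_kronecker_mul, Matrix.one_mul, conj_mul_conj_of_conjTranspose_mul_self hW,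
      single_mul_single_same, one_mul]
  · dsimp only
    rw [← mul_kronecker_mul, conj_mul_conj_of_conjTranspose_mul_self hW,
      single_mul_single_of_ne (h := hcd), Matrix.mul_zero, Matrix.zero_mul, zero_kronecker]

theorem pinchW_one_kronecker {W : Matrix A A ℂ} (hW : W * Wᴴ = 1) (hW' : Wᴴ * W = 1)
    (σ : Matrix B B ℂ) : pinchW W (1 ⊗ₖ σ) = 1 ⊗ₖ σ := by
  have hterm (c : A) : (W * single c c 1 * Wᴴ) ⊗ₖ (1 : Matrix B B ℂ) * (1 ⊗ₖ σ) *
      ((W * single c c 1 * Wᴴ) ⊗ₖ (1 : Matrix B B ℂ)) = (W * single c c 1 * Wᴴ) ⊗ₖ σ := by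
    rw [← mul_kronecker_mul, ← mul_kronecker_mul, Matrix.mul_one, Matrix.one_mul, Matrix.mul_one,
      conj_mul_conj_of_conjTranspose_mul_self hW', single_mul_single_same, one_mul]
  have hsum : ∑ c, W * single c c (1 : ℂ) * Wᴴ = 1 := by
    rw [← Finset.sum_mul, ← Finset.mul_sum, sum_single_one, Matrix.mul_one, hW]
  rw [pinchW, Finset.sum_congr rfl fun c _ => hterm c, ← hsum]
  ext ⟨i, b⟩ ⟨j, b'⟩
  simp [Matrix.sum_apply, Finset.sum_mul]

theorem commute_single_kronecker_one_of_forall_pinchW_eq {ρ : Matrix (A × B) (A × B) ℂ}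
    (hfix : ∀ W : Matrix A A ℂ, W * Wᴴ = 1 → Wᴴ * W = 1 → pinchW W ρ = ρ) (a a' : A) :
    Commute (single a a' (1 : ℂ) ⊗ₖ (1 : Matrix B B ℂ)) ρ := by
  have hdiag (c : A) : Commute (single c c (1 : ℂ) ⊗ₖ (1 : Matrix B B ℂ)) ρ := by
    simpa using commute_kronecker_one_of_pinchW_eq (by simp) (hfix 1 (by simp) (by simp)) c
  rcases eq_or_ne a a' with rfl | h
  · exact hdiag a
  obtain ⟨hW, hW'⟩ := swapMixer_unitary a a'
  set K := swapMixer a a' * single a a (1 : ℂ) * (swapMixer a a')ᴴ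
  have hK := commute_kronecker_one_of_pinchW_eq hW' (hfix _ hW hW') a
  have hKaa' : K a a' ≠ 0 := by
    rw [show K a a' = _ from mul_single_mul_conjTranspose_apply _ _ _ _,
      swapMixer_apply_self h, swapMixer_apply_swap h]
    simp [Complex.ext_iff]
  have hsandwich : single a a 1 * K * single a' a' 1 = K a a' • single a a' (1 : ℂ) := by
    rw [single_mul_mul_single, one_mul, mul_one, smul_single, smul_eq_mul, mul_one]
  have hKsingle := ((hdiag a).mul_kronecker_one hK).mul_kronecker_one (hdiag a')
  rw [hsandwich, smul_kronecker] at hKsingle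
  simpa [smul_smul, hKaa'] using hKsingle.smul_left (K a a')⁻¹

end Pinching

theorem fixed_by_all_pinchings_iff_general (dA dB : ℕ)
    (ρ : Matrix (Fin dA × Fin dB) (Fin dA × Fin dB) ℂ) (hρ : IsDensity ρ) :
    (∀ W : Matrix (Fin dA) (Fin dA) ℂ, W * Wᴴ = 1 → Wᴴ * W = 1 → pinchW W ρ = ρ) ↔
      ∃ ρB : Matrix (Fin dB) (Fin dB) ℂ, ρB.PosSemidef ∧ ρB.trace = 1 ∧
        ρ = ((dA : ℂ))⁻¹ • ((1 : Matrix (Fin dA) (Fin dA) ℂ) ⊗ₖ ρB) := by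
  constructor
  · intro hfix
    obtain ⟨⟨a₀, -⟩⟩ : Nonempty (Fin dA × Fin dB) := by
      by_contra h
      simpa [not_nonempty_iff.mp h, Matrix.trace] using hρ.2
    set σ := ρ.submatrix (a₀, ·) (a₀, ·)
    have hρσ : ρ = 1 ⊗ₖ σ :=
      eq_one_kronecker_of_forall_commute (commute_single_kronecker_one_of_forall_pinchW_eq hfix) a₀
    have htr : (dA : ℂ) * σ.trace = 1 := by simpa [hρσ, trace_kronecker] using hρ.2
    refine ⟨(dA : ℂ) • σ, (hρ.1.submatrix _).smul (by positivity),
      by rw [trace_smul, smul_eq_mul, htr], ?_⟩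
    rw [kronecker_smul, smul_smul, inv_mul_cancel₀ (left_ne_zero_of_mul_eq_one htr), one_smul,
      ← hρσ]
  · rintro ⟨ρB, -, -, rfl⟩ W hW hW'
    rw [← kronecker_smul, pinchW_one_kronecker hW hW']

/-- **Intersection of all classical-quantum lobes.** A density matrix `ρ`
on `ℂ^{d_A} ⊗ ℂ^{d_B}` (with `d_A ≥ 2`) is a fixed point of the dephasing map `P_W` for
every unitary `W` on `A` (i.e. classical-quantum with respect to every orthonormal basis
of `ℂ^{d_A}`) if and only if `ρ = (1/d_A) I ⊗ ρ_B` for some density matrix `ρ_B`. -/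
theorem fixed_by_all_pinchings_iff (dA dB : ℕ) (hdA : 2 ≤ dA)
    (ρ : Matrix (Fin dA × Fin dB) (Fin dA × Fin dB) ℂ) (hρ : IsDensity ρ) :
    (∀ W : Matrix (Fin dA) (Fin dA) ℂ, W * Wᴴ = 1 → Wᴴ * W = 1 → pinchW W ρ = ρ) ↔
      ∃ ρB : Matrix (Fin dB) (Fin dB) ℂ, ρB.PosSemidef ∧ ρB.trace = 1 ∧
        ρ = ((dA : ℂ))⁻¹ • ((1 : Matrix (Fin dA) (Fin dA) ℂ) ⊗ₖ ρB) :=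
  fixed_by_all_pinchings_iff_general dA dB ρ hρ
end
end

section
/- (Vanishing of the basis-minimized monotone exactly on discord-free states) For a density matrix ρ on ℂ^{d_A} ⊗ ℂ^{d_B} define D(ρ) = inf over unitaries W ∈ M_{d_A}(ℂ) of Δ_W(ρ), where Δ_W(ρ) = S(P_W(ρ)) − S(ρ). Then D(ρ) ≥ 0, and D(ρ) = 0 if and only if there exists a unitary W ∈ M_{d_A}(ℂ) with P_W(ρ) = ρ, i.e. if and only if ρ is a classical-quantum state with respect to some orthonormal basis of ℂ^{d_A}. -/
open scoped Classical ComplexOrder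
open Matrix Kronecker BigOperators

noncomputable section

/-- The basis-independent (basis-minimized) monotone:
`D(ρ) = inf_W (S(P_W(ρ)) − S(ρ))` over all unitaries `W` on `A`. -/
noncomputable def Dmin {A B : Type*} [Fintype A] [DecidableEq A] [Fintype B] [DecidableEq B]
    (ρ : Matrix (A × B) (A × B) ℂ) : ℝ :=
  ⨅ W : Matrix.unitaryGroup A ℂ, (vnEntropy (pinchW (W : Matrix A A ℂ) ρ) - vnEntropy ρ)

/-!
Let `σ = P_W(ρ)`. The projections `W|c⟩⟨c|W† ⊗ I` commute with `σ`, so every power `σᵏ` is fixed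
by the dephasing, and since dephasing is self-adjoint for the trace pairing, `tr(ρ σᵏ) = tr(σᵏ⁺¹)`.
In eigenbases `ρ = ∑ pᵢ |uᵢ⟩⟨uᵢ|`, `σ = ∑ qⱼ |vⱼ⟩⟨vⱼ|` these moment identities say that
`∑ⱼ ((M p)ⱼ - qⱼ) g(qⱼ) = 0` for every `g`, where `M j i = |⟨vⱼ, uᵢ⟩|²` is doubly stochastic.
With `g = log` this writes `S(σ) - S(ρ)` as `∑ M j i (pᵢ log pᵢ - pᵢ log qⱼ - pᵢ + qⱼ)`, a sum of
nonnegative Gibbs terms which vanishes only if `pᵢ = qⱼ` whenever `M j i ≠ 0`, that is, only if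
`ρ = σ` (Klein's inequality). Finally `W ↦ Δ_W(ρ)` is continuous on the compact unitary group, so
the infimum `D(ρ)` is attained.
-/

open Real

section Gibbs

variable {ι : Type*} [Fintype ι]

theorem sum_mul_comp_eq_zero_of_sum_mul_pow_eq_zero {a q : ι → ℝ}
    (h : ∀ k : ℕ, ∑ j, a j * q j ^ k = 0) (g : ℝ → ℝ) : ∑ j, a j * g (q j) = 0 := by
  classical
  -- `g` agrees with a polynomial on the finitely many points `q j`
  set P : Polynomial ℝ := Lagrange.interpolate (Finset.univ.image q) id g
  have hP : ∀ j, g (q j) = P.eval (q j) := fun j =>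
    (Lagrange.eval_interpolate_at_node g (Set.injOn_id _)
      (Finset.mem_image_of_mem q (Finset.mem_univ j))).symm
  simp only [hP, Polynomial.eval_eq_sum_range, Finset.mul_sum]
  rw [Finset.sum_comm]
  refine Finset.sum_eq_zero fun k _ => ?_
  simpa [mul_left_comm _ (P.coeff k), ← Finset.mul_sum] using Or.inr (h k)

open InformationTheory in
theorem mul_log_sub_mul_log_sub_add_eq_mul_klFun (x : ℝ) {y : ℝ} (hy : 0 < y) :
    x * log x - x * log y - x + y = y * klFun (x / y) := by
  rcases eq_or_ne x 0 with rfl | hx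
  · simp [klFun]
  · rw [klFun, log_div hx hy.ne']
    field_simp
    ring

theorem mul_log_sub_mul_log_sub_add_nonneg {x y : ℝ} (hx : 0 ≤ x) (hy : 0 < y) :
    0 ≤ x * log x - x * log y - x + y := by
  rw [mul_log_sub_mul_log_sub_add_eq_mul_klFun x hy]
  exact mul_nonneg hy.le (InformationTheory.klFun_nonneg (div_nonneg hx hy.le))

theorem mul_log_sub_mul_log_sub_add_eq_zero_iff {x y : ℝ} (hx : 0 ≤ x) (hy : 0 < y) :
    x * log x - x * log y - x + y = 0 ↔ x = y := by
  rw [mul_log_sub_mul_log_sub_add_eq_mul_klFun x hy, mul_eq_zero,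
    InformationTheory.klFun_eq_zero_iff (div_nonneg hx hy.le), div_eq_one_iff_eq hy.ne']
  simp [hy.ne']

variable [DecidableEq ι] {M : Matrix ι ι ℝ} {p q : ι → ℝ}

theorem mul_eq_zero_of_sum_mulVec_mul_comp_eq (hM : M ∈ doublyStochastic ℝ ι) (hp : 0 ≤ p)
    (hmom : ∀ g : ℝ → ℝ, ∑ j, (M *ᵥ p) j * g (q j) = ∑ j, q j * g (q j)) {j : ι}
    (hj : q j = 0) (i : ι) : M j i * p i = 0 := by
  have hr : ∀ j, 0 ≤ (M *ᵥ p) j := fun j =>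
    Finset.sum_nonneg fun i _ => mul_nonneg (hM.1 j i) (hp i)
  have hzero : ∑ j, (M *ᵥ p) j * (if q j = 0 then 1 else 0) = 0 := by
    rw [hmom fun t => if t = 0 then 1 else 0]
    exact Finset.sum_eq_zero fun j _ => by split_ifs with h <;> simp [h]
  rw [Fintype.sum_eq_zero_iff_of_nonneg fun j => mul_nonneg (hr j) (by positivity)] at hzero
  have hrj : (M *ᵥ p) j = 0 := by simpa [hj] using congrFun hzero j
  rw [Matrix.mulVec, dotProduct,
    Fintype.sum_eq_zero_iff_of_nonneg fun i => mul_nonneg (hM.1 j i) (hp i)] at hrj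
  exact congrFun hrj i

theorem sum_sum_mul_log_sub_eq (hM : M ∈ doublyStochastic ℝ ι)
    (hmom : ∀ g : ℝ → ℝ, ∑ j, (M *ᵥ p) j * g (q j) = ∑ j, q j * g (q j)) :
    ∑ j, ∑ i, M j i * (p i * log (p i) - p i * log (q j) - p i + q j)
      = ∑ j, negMulLog (q j) - ∑ i, negMulLog (p i) := by
  obtain ⟨-, hrow, hcol⟩ := mem_doublyStochastic_iff_sum.mp hM
  have hlog := hmom log
  have hone := hmom fun _ => 1
  simp only [Matrix.mulVec, dotProduct, mul_one] at hlog hone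
  have e₁ : ∑ j, ∑ i, M j i * (p i * log (p i)) = ∑ i, p i * log (p i) := by
    rw [Finset.sum_comm]
    simp only [← Finset.sum_mul, hcol, one_mul]
  have e₂ : ∑ j, ∑ i, M j i * (p i * log (q j)) = ∑ j, q j * log (q j) := by
    simp only [← hlog, Finset.sum_mul, mul_assoc]
  have e₃ : ∑ j, ∑ i, M j i * q j = ∑ j, q j := by
    simp only [← Finset.sum_mul, hrow, one_mul]
  simp only [mul_sub, mul_add, Finset.sum_add_distrib, Finset.sum_sub_distrib, e₁, e₂, e₃,
    hone, negMulLog, neg_mul, Finset.sum_neg_distrib]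
  ring

theorem sum_negMulLog_le_of_doublyStochastic (hM : M ∈ doublyStochastic ℝ ι) (hp : 0 ≤ p)
    (hq : 0 ≤ q) (hmom : ∀ g : ℝ → ℝ, ∑ j, (M *ᵥ p) j * g (q j) = ∑ j, q j * g (q j)) :
    ∑ i, negMulLog (p i) ≤ ∑ j, negMulLog (q j) ∧
      (∑ i, negMulLog (p i) = ∑ j, negMulLog (q j) → ∀ j i, M j i ≠ 0 → p i = q j) := by
  set T : ι → ι → ℝ := fun j i => M j i * (p i * log (p i) - p i * log (q j) - p i + q j)
  have hT : ∀ j i, 0 ≤ T j i ∧ (T j i = 0 → M j i ≠ 0 → p i = q j) := by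
    intro j i
    rcases (hq j).eq_or_lt with hj | hj
    -- `log (q j)` is junk here, but the whole term vanishes since `M j i * p i = 0`
    · rcases mul_eq_zero.mp (mul_eq_zero_of_sum_mulVec_mul_comp_eq hM hp hmom hj.symm i)
        with hMji | hpi
      · simp [T, hMji]
      · simp [T, hpi, ← hj]
    · refine ⟨mul_nonneg (hM.1 j i) (mul_log_sub_mul_log_sub_add_nonneg (hp i) hj),
        fun h hMji => ?_⟩
      exact (mul_log_sub_mul_log_sub_add_eq_zero_iff (hp i) hj).mp
        ((mul_eq_zero.mp h).resolve_left hMji)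
  have hsum := sum_sum_mul_log_sub_eq hM hmom
  have hnonneg : ∀ j, 0 ≤ ∑ i, T j i := fun j => Finset.sum_nonneg fun i _ => (hT j i).1
  refine ⟨sub_nonneg.mp (hsum ▸ Finset.sum_nonneg fun j _ => hnonneg j),
    fun heq j i hMji => ?_⟩
  rw [heq, sub_self, Fintype.sum_eq_zero_iff_of_nonneg hnonneg] at hsum
  have hj := congrFun hsum j
  rw [Pi.zero_apply, Fintype.sum_eq_zero_iff_of_nonneg fun i => (hT j i).1] at hj
  exact (hT j i).2 (congrFun hj i) hMji

end Gibbs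

section Entropy

variable {n : Type*} [Fintype n] [DecidableEq n]

theorem vnEntropy_eq_sum_negMulLog {σ : Matrix n n ℂ} (hσ : σ.IsHermitian) :
    vnEntropy σ = (∑ i, negMulLog (hσ.eigenvalues i)) / log 2 := by
  simp only [vnEntropy, dif_pos hσ, negMulLog, logb, Finset.sum_div, ← Finset.sum_neg_distrib]
  exact Finset.sum_congr rfl fun i _ => by ring

theorem vnEntropy_eq_re_trace_cfc {σ : Matrix n n ℂ} (hσ : σ.IsHermitian) :
    vnEntropy σ = (cfc negMulLog σ).trace.re / log 2 := by
  rw [vnEntropy_eq_sum_negMulLog hσ, hσ.cfc_eq, Matrix.IsHermitian.cfc]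
  simp [Matrix.trace_mul_cycle]

theorem Continuous.vnEntropy {X : Type*} [TopologicalSpace X] {σ : X → Matrix n n ℂ}
    (hσ : Continuous σ) (hherm : ∀ x, (σ x).IsHermitian) :
    Continuous fun x => vnEntropy (σ x) := by
  simp only [vnEntropy_eq_re_trace_cfc (hherm _)]
  -- the L² operator norm makes matrices a C⋆-algebra without changing their topology
  have : Continuous fun x => cfc negMulLog (σ x) := by
    open scoped Matrix.Norms.L2Operator in
    exact Continuous.cfc_of_mem_nhdsSet _ (s := Set.univ) Filter.univ_mem hσ hherm
      continuous_negMulLog.continuousOn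
  fun_prop

end Entropy

section Klein

variable {n : Type*} [Fintype n] [DecidableEq n]

theorem normSq_mem_doublyStochastic {U : Matrix n n ℂ} (hU : U ∈ Matrix.unitaryGroup n ℂ) :
    Matrix.of (fun i j => Complex.normSq (U i j)) ∈ doublyStochastic ℝ n := by
  have hnormSq : ∀ z : ℂ, z * star z = (Complex.normSq z : ℂ) := Complex.mul_conj
  refine mem_doublyStochastic_iff_sum.mpr ⟨fun i j => Complex.normSq_nonneg _, fun i => ?_,
    fun j => ?_⟩
  · have h := congrFun (congrFun (Matrix.mem_unitaryGroup_iff.mp hU) i) i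
    simp only [Matrix.mul_apply, Matrix.star_apply, hnormSq, Matrix.one_apply_eq] at h
    exact_mod_cast h
  · have h := congrFun (congrFun (Matrix.mem_unitaryGroup_iff'.mp hU) j) j
    simp only [Matrix.mul_apply, Matrix.star_apply, mul_comm (star _), hnormSq,
      Matrix.one_apply_eq] at h
    exact_mod_cast h

variable {ρ σ : Matrix n n ℂ}

/-- `eigenOverlap hρ hσ j i = |⟨v_j, u_i⟩|²` for the eigenvectors `u_i` of `ρ` and `v_j` of `σ`. -/
def eigenOverlap (hρ : ρ.IsHermitian) (hσ : σ.IsHermitian) : Matrix n n ℝ :=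
  Matrix.of fun j i =>
    Complex.normSq ((star (hσ.eigenvectorUnitary : Matrix n n ℂ) * hρ.eigenvectorUnitary) j i)

theorem eigenOverlap_mem_doublyStochastic (hρ : ρ.IsHermitian) (hσ : σ.IsHermitian) :
    eigenOverlap hρ hσ ∈ doublyStochastic ℝ n :=
  normSq_mem_doublyStochastic
    (Submonoid.mul_mem _ (Unitary.star_mem hσ.eigenvectorUnitary.2) hρ.eigenvectorUnitary.2)

theorem trace_mul_pow_eq_sum_eigenvalues (hσ : σ.IsHermitian) (X : Matrix n n ℂ) (k : ℕ) :
    (X * σ ^ k).trace = ∑ j, (star (hσ.eigenvectorUnitary : Matrix n n ℂ) * X *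
      hσ.eigenvectorUnitary) j j * (hσ.eigenvalues j : ℂ) ^ k := by
  conv_lhs => rw [hσ.spectral_theorem, ← map_pow, Matrix.diagonal_pow,
    Unitary.conjStarAlgAut_apply, ← Matrix.mul_assoc, Matrix.trace_mul_cycle,
    ← Matrix.mul_assoc]
  simp [Matrix.trace]

theorem star_mul_mul_eigenvectorUnitary_apply_self (hρ : ρ.IsHermitian) (hσ : σ.IsHermitian)
    (j : n) :
    (star (hσ.eigenvectorUnitary : Matrix n n ℂ) * ρ * hσ.eigenvectorUnitary) j j =
      ((eigenOverlap hρ hσ *ᵥ hρ.eigenvalues) j : ℂ) := by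
  set A := star (hσ.eigenvectorUnitary : Matrix n n ℂ) * hρ.eigenvectorUnitary
  have hconj : star (hσ.eigenvectorUnitary : Matrix n n ℂ) * ρ * hσ.eigenvectorUnitary =
      A * Matrix.diagonal (Complex.ofReal ∘ hρ.eigenvalues) * star A := by
    conv_lhs => rw [hρ.spectral_theorem]
    simp [A, star_mul, Matrix.mul_assoc]
  rw [hconj, Matrix.mul_apply]
  simp only [Matrix.mul_diagonal, Matrix.star_apply, Matrix.mulVec, dotProduct, eigenOverlap,
    Matrix.of_apply, Complex.ofReal_sum, Complex.ofReal_mul, ← Complex.mul_conj]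
  exact Finset.sum_congr rfl fun i _ => by simp only [Function.comp_apply, RCLike.star_def]; ring

theorem eq_of_eigenOverlap_ne_zero (hρ : ρ.IsHermitian) (hσ : σ.IsHermitian)
    (h : ∀ j i, eigenOverlap hρ hσ j i ≠ 0 → hρ.eigenvalues i = hσ.eigenvalues j) :
    ρ = σ := by
  set U : Matrix n n ℂ := ↑hρ.eigenvectorUnitary
  set V : Matrix n n ℂ := ↑hσ.eigenvectorUnitary
  set A := star V * U
  have hU : U * star U = 1 := Unitary.mul_star_self_of_mem hρ.eigenvectorUnitary.2
  have hV : V * star V = 1 := Unitary.mul_star_self_of_mem hσ.eigenvectorUnitary.2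
  have hV' : star V * V = 1 := Unitary.star_mul_self_of_mem hσ.eigenvectorUnitary.2
  have hVA : V * A = U := by rw [← Matrix.mul_assoc, hV, Matrix.one_mul]
  have hAA : A * star A = 1 := by
    rw [star_mul, star_star, Matrix.mul_assoc, ← Matrix.mul_assoc U, hU, Matrix.one_mul, hV']
  have hcomm : Matrix.diagonal (Complex.ofReal ∘ hσ.eigenvalues) * A =
      A * Matrix.diagonal (Complex.ofReal ∘ hρ.eigenvalues) := by
    ext j i
    rw [Matrix.diagonal_mul, Matrix.mul_diagonal]
    by_cases hA : A j i = 0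
    · simp [hA]
    · simp [h j i (Complex.normSq_eq_zero.not.mpr hA), mul_comm]
  calc ρ = U * Matrix.diagonal (Complex.ofReal ∘ hρ.eigenvalues) * star U :=
        hρ.spectral_theorem
    _ = V * (A * Matrix.diagonal (Complex.ofReal ∘ hρ.eigenvalues) * star A) * star V := by
      rw [← hVA, star_mul]; noncomm_ring
    _ = V * Matrix.diagonal (Complex.ofReal ∘ hσ.eigenvalues) * star V := by
      rw [← hcomm, Matrix.mul_assoc _ A, hAA, Matrix.mul_one, Matrix.mul_assoc]
    _ = σ := hσ.spectral_theorem.symm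

theorem vnEntropy_le_of_trace_mul_pow_eq (hρ : ρ.PosSemidef) (hσ : σ.PosSemidef)
    (hmom : ∀ k : ℕ, (ρ * σ ^ k).trace = (σ ^ (k + 1)).trace) :
    vnEntropy ρ ≤ vnEntropy σ ∧ (vnEntropy ρ = vnEntropy σ → ρ = σ) := by
  set p := hρ.1.eigenvalues
  set q := hσ.1.eigenvalues
  set M := eigenOverlap hρ.1 hσ.1
  have hσdiag : ∀ j, (star (hσ.1.eigenvectorUnitary : Matrix n n ℂ) * σ *
      hσ.1.eigenvectorUnitary) j j = q j := by
    intro j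
    have h := hσ.1.conjStarAlgAut_star_eigenvectorUnitary
    simp only [Unitary.conjStarAlgAut_star_apply] at h
    simp [h, q]
  have hpow : ∀ k : ℕ, ∑ j, ((M *ᵥ p) j - q j) * q j ^ k = 0 := by
    intro k
    have h := hmom k
    simp only [pow_succ', trace_mul_pow_eq_sum_eigenvalues hσ.1, hσdiag,
      star_mul_mul_eigenvectorUnitary_apply_self hρ.1 hσ.1] at h
    simp only [sub_mul, Finset.sum_sub_distrib, sub_eq_zero]
    exact_mod_cast h
  have hmom' : ∀ g : ℝ → ℝ, ∑ j, (M *ᵥ p) j * g (q j) = ∑ j, q j * g (q j) := fun g => by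
    simpa [sub_mul, sub_eq_zero] using sum_mul_comp_eq_zero_of_sum_mul_pow_eq_zero hpow g
  obtain ⟨hle, heq⟩ := sum_negMulLog_le_of_doublyStochastic
    (eigenOverlap_mem_doublyStochastic hρ.1 hσ.1) hρ.eigenvalues_nonneg
    hσ.eigenvalues_nonneg hmom'
  have hlog2 : 0 < log 2 := log_pos one_lt_two
  rw [vnEntropy_eq_sum_negMulLog hρ.1, vnEntropy_eq_sum_negMulLog hσ.1,
    div_le_div_iff_of_pos_right hlog2, div_left_inj' hlog2.ne']
  exact ⟨hle, fun h => eq_of_eigenOverlap_ne_zero hρ.1 hσ.1 (heq h)⟩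

end Klein

section Pinching

variable {m ι : Type*} [Fintype m] [Fintype ι]

def pinching (P : ι → Matrix m m ℂ) (X : Matrix m m ℂ) : Matrix m m ℂ :=
  ∑ c, P c * X * P c

variable {P : ι → Matrix m m ℂ}

theorem trace_mul_pinching (X Y : Matrix m m ℂ) :
    (X * pinching P Y).trace = (pinching P X * Y).trace := by
  simp only [pinching, Matrix.mul_sum, Matrix.sum_mul, Matrix.trace_sum]
  refine Finset.sum_congr rfl fun c _ => ?_
  rw [← Matrix.mul_assoc, ← Matrix.mul_assoc, Matrix.trace_mul_comm, ← Matrix.mul_assoc,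
    ← Matrix.mul_assoc]

theorem pinching_posSemidef (hP : ∀ c, (P c)ᴴ = P c) {X : Matrix m m ℂ} (hX : X.PosSemidef) :
    (pinching P X).PosSemidef := by
  refine Matrix.posSemidef_sum _ fun c _ => ?_
  simpa only [hP] using hX.mul_mul_conjTranspose_same (P c)

variable [DecidableEq ι] (hP : ∀ c d, P c * P d = if c = d then P c else 0)
include hP

theorem commute_pinching (X : Matrix m m ℂ) (c : ι) : Commute (pinching P X) (P c) := by
  have h₁ : pinching P X * P c = P c * X * P c := by
    simp only [pinching, Finset.sum_mul, Matrix.mul_assoc, hP]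
    simp
  have h₂ : P c * pinching P X = P c * X * P c := by
    simp only [pinching, Finset.mul_sum, ← Matrix.mul_assoc, hP]
    simp
  exact h₁.trans h₂.symm

variable [DecidableEq m]

theorem pinching_eq_self_of_commute (hsum : ∑ c, P c = 1) {X : Matrix m m ℂ}
    (hX : ∀ c, Commute X (P c)) : pinching P X = X := by
  calc pinching P X = ∑ c, X * (P c * P c) := by
        refine Finset.sum_congr rfl fun c _ => ?_
        rw [(hX c).symm.eq, Matrix.mul_assoc]
    _ = X := by simp only [hP, if_true, ← Matrix.mul_sum, hsum, Matrix.mul_one]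

theorem trace_mul_pinching_pow (hsum : ∑ c, P c = 1) (X : Matrix m m ℂ) (k : ℕ) :
    (X * pinching P X ^ k).trace = (pinching P X ^ (k + 1)).trace := by
  have hfix : pinching P (pinching P X ^ k) = pinching P X ^ k :=
    pinching_eq_self_of_commute hP hsum fun c => (commute_pinching hP X c).pow_left k
  rw [Matrix.trace_mul_comm, ← hfix, ← trace_mul_pinching, pow_succ]

end Pinching

theorem sum_kronecker_one {ι A B : Type*} [DecidableEq B] (s : Finset ι)
    (X : ι → Matrix A A ℂ) :
    ∑ c ∈ s, X c ⊗ₖ (1 : Matrix B B ℂ) = (∑ c ∈ s, X c) ⊗ₖ 1 := by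
  ext ⟨a, b⟩ ⟨a', b'⟩
  simp [Matrix.sum_apply, Finset.sum_mul]

section RotatedProjection

variable {A B : Type*} [Fintype A] [DecidableEq A] [DecidableEq B]

def rotatedProj (W : Matrix A A ℂ) (c : A) : Matrix (A × B) (A × B) ℂ :=
  (W * Matrix.single c c 1 * Wᴴ) ⊗ₖ 1

theorem pinchW_eq_pinching [Fintype B] (W : Matrix A A ℂ) (ρ : Matrix (A × B) (A × B) ℂ) :
    pinchW W ρ = pinching (rotatedProj W) ρ := rfl

theorem conjTranspose_rotatedProj (W : Matrix A A ℂ) (c : A) :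
    (rotatedProj (B := B) W c)ᴴ = rotatedProj W c := by
  simp [rotatedProj, Matrix.conjTranspose_kronecker, Matrix.conjTranspose_single,
    Matrix.mul_assoc]

theorem rotatedProj_mul_rotatedProj [Fintype B] {W : Matrix A A ℂ} (hW : Wᴴ * W = 1)
    (c d : A) :
    rotatedProj (B := B) W c * rotatedProj W d = if c = d then rotatedProj W c else 0 := by
  have : W * Matrix.single c c 1 * Wᴴ * (W * Matrix.single d d 1 * Wᴴ)
      = W * (Matrix.single c c 1 * Matrix.single d d 1) * Wᴴ := by
    simp only [Matrix.mul_assoc, ← Matrix.mul_assoc Wᴴ, hW, Matrix.one_mul]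
  rw [rotatedProj, rotatedProj, ← Matrix.mul_kronecker_mul, Matrix.one_mul, this]
  split_ifs with h
  · rw [h, Matrix.single_mul_single_same, mul_one]
  · rw [Matrix.single_mul_single_of_ne (h := h)]
    simp

theorem sum_rotatedProj {W : Matrix A A ℂ} (hW : W * Wᴴ = 1) :
    ∑ c, rotatedProj (B := B) W c = 1 := by
  simp only [rotatedProj, sum_kronecker_one, ← Finset.sum_mul, ← Finset.mul_sum,
    Matrix.sum_single_one, Matrix.mul_one, hW, Matrix.one_kronecker_one]

end RotatedProjection

instance Matrix.unitaryGroup.instCompactSpace {n : Type*} [Fintype n] [DecidableEq n] :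
    CompactSpace (Matrix.unitaryGroup n ℂ) :=
  isCompact_iff_compactSpace.mp <| IsCompact.of_isClosed_subset
    (isCompact_univ_pi fun _ => isCompact_univ_pi fun _ => isCompact_closedBall (0 : ℂ) 1)
    isClosed_unitary fun _ hU i _ j _ => by simpa using entry_norm_bound_of_unitary hU i j

@[fun_prop]
theorem Continuous.matrix_kronecker {X R l m n p : Type*} [TopologicalSpace X]
    [TopologicalSpace R] [Mul R] [ContinuousMul R] {f : X → Matrix l m R}
    {g : X → Matrix n p R} (hf : Continuous f) (hg : Continuous g) :
    Continuous fun x => f x ⊗ₖ g x :=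
  continuous_matrix fun _ _ => (hf.matrix_elem _ _).mul (hg.matrix_elem _ _)

theorem continuous_pinchW {A B : Type*} [Fintype A] [DecidableEq A] [Fintype B] [DecidableEq B]
    (ρ : Matrix (A × B) (A × B) ℂ) : Continuous fun W : Matrix A A ℂ => pinchW W ρ := by
  unfold pinchW
  fun_prop

section Dmin

variable {A B : Type*} [Fintype A] [DecidableEq A] [Fintype B] [DecidableEq B]
  {ρ : Matrix (A × B) (A × B) ℂ}

theorem vnEntropy_le_vnEntropy_pinchW {W : Matrix A A ℂ} (hW : W ∈ Matrix.unitaryGroup A ℂ)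
    (hρ : ρ.PosSemidef) :
    vnEntropy ρ ≤ vnEntropy (pinchW W ρ) ∧
      (vnEntropy ρ = vnEntropy (pinchW W ρ) → ρ = pinchW W ρ) := by
  have hW₁ : W * Wᴴ = 1 := Matrix.mem_unitaryGroup_iff.mp hW
  have hW₂ : Wᴴ * W = 1 := Matrix.mem_unitaryGroup_iff'.mp hW
  rw [pinchW_eq_pinching]
  exact vnEntropy_le_of_trace_mul_pow_eq hρ (pinching_posSemidef (conjTranspose_rotatedProj W) hρ)
    (trace_mul_pinching_pow (rotatedProj_mul_rotatedProj hW₂) (sum_rotatedProj hW₁) ρ)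

theorem Dmin_le (hρ : ρ.PosSemidef) (W : Matrix.unitaryGroup A ℂ) :
    Dmin ρ ≤ vnEntropy (pinchW (W : Matrix A A ℂ) ρ) - vnEntropy ρ :=
  ciInf_le ⟨0, Set.forall_mem_range.2 fun W =>
    sub_nonneg.2 (vnEntropy_le_vnEntropy_pinchW W.2 hρ).1⟩ W

theorem Dmin_nonneg (hρ : ρ.PosSemidef) : 0 ≤ Dmin ρ :=
  le_ciInf fun W => sub_nonneg.2 (vnEntropy_le_vnEntropy_pinchW W.2 hρ).1

theorem exists_eq_Dmin (hρ : ρ.PosSemidef) :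
    ∃ W : Matrix.unitaryGroup A ℂ,
      vnEntropy (pinchW (W : Matrix A A ℂ) ρ) - vnEntropy ρ = Dmin ρ := by
  have hcont : Continuous fun W : Matrix.unitaryGroup A ℂ =>
      vnEntropy (pinchW (W : Matrix A A ℂ) ρ) - vnEntropy ρ :=
    ((continuous_pinchW ρ).comp continuous_subtype_val).vnEntropy
      (fun W => (pinching_posSemidef (conjTranspose_rotatedProj _) hρ).1) |>.sub continuous_const
  obtain ⟨W, -, hW⟩ := isCompact_univ.exists_isMinOn Set.univ_nonempty hcont.continuousOn
  exact ⟨W, (Dmin_le hρ W).antisymm' (le_ciInf fun V => hW (Set.mem_univ V))⟩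

end Dmin

/-- **Vanishing of the basis-minimized monotone exactly on discord-free
states.** For a density matrix `ρ` on `ℂ^{d_A} ⊗ ℂ^{d_B}` and
`D(ρ) = inf_W (S(P_W(ρ)) − S(ρ))` over unitaries `W` on `A`: `D(ρ) ≥ 0`, and `D(ρ) = 0`
iff `P_W(ρ) = ρ` for some unitary `W`, i.e. iff `ρ` is classical-quantum with respect to
some orthonormal basis of `ℂ^{d_A}`. -/
theorem Dmin_nonneg_and_eq_zero_iff (dA dB : ℕ)
    (ρ : Matrix (Fin dA × Fin dB) (Fin dA × Fin dB) ℂ) (hρ : IsDensity ρ) :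
    0 ≤ Dmin ρ ∧
      (Dmin ρ = 0 ↔ ∃ W : Matrix (Fin dA) (Fin dA) ℂ,
        W * Wᴴ = 1 ∧ Wᴴ * W = 1 ∧ pinchW W ρ = ρ) := by
  refine ⟨Dmin_nonneg hρ.1, fun hD => ?_, fun ⟨W, hW, _, hfix⟩ => ?_⟩
  · obtain ⟨W, hW⟩ := exists_eq_Dmin hρ.1
    have hS : vnEntropy ρ = vnEntropy (pinchW (W : Matrix (Fin dA) (Fin dA) ℂ) ρ) := by linarith
    exact ⟨W, Unitary.mul_star_self_of_mem W.2, Unitary.star_mul_self_of_mem W.2,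
      ((vnEntropy_le_vnEntropy_pinchW W.2 hρ.1).2 hS).symm⟩
  · refine (Dmin_nonneg hρ.1).antisymm' ?_
    simpa [hfix] using Dmin_le hρ.1 ⟨W, Matrix.mem_unitaryGroup_iff.mpr hW⟩
end
end
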